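/- Let U ⊆ V and i ∈ V. (a) If i ∈ U, then An_low^U(i) = De_high^U(i) = {i}. (b) If i ∉ U, then An_low^U(i) = { j ∈ an(i)∩U : b_{ji} > max_{k ∈ de(j)∩U∩an(i)} b_{jk} b_{ki} / b_{kk} } and De_high^U(i) = { l ∈ de(i)∩U : b_{il} > max_{k ∈ de(i)∩U∩an(l)} b_{ik} b_{kl} / b_{kk} } (maxima over the empty set are 0). -/

import Mathlib

open scoped NNReal ENNReal Classical

namespace MaxLinearDAG

variable {d : ℕ}

/-- `p` is a directed path (with at least one edge) from `j` to `i` in the edge relation `E`. -/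
def PathFrom (E : Fin d → Fin d → Prop) (j i : Fin d) (p : List (Fin d)) : Prop :=
  2 ≤ p.length ∧ p.head? = some j ∧ p.getLast? = some i ∧ List.Chain' E p

/-- The directed graph given by `E` is acyclic: no directed path from a node to itself. -/
def Acyclic (E : Fin d → Fin d → Prop) : Prop :=
  ∀ i, ¬ ∃ p, PathFrom E i i p

/-- `j` is an ancestor of `i`: there is a path from `j` to `i`. -/
def anc (E : Fin d → Fin d → Prop) (j i : Fin d) : Prop :=
  ∃ p, PathFrom E j i p

/-- The weight of a path `p` starting at `j`: `c j j` times the product of the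
edge weights along `p`. -/
noncomputable def pathWeight (c : Fin d → Fin d → ℝ≥0) (j : Fin d) (p : List (Fin d)) : ℝ≥0 :=
  c j j * ((p.zip p.tail).map fun q => c q.1 q.2).prod

/-- `b` is the max-linear coefficient matrix of the recursive ML model on `(E, c)`:
for `j ∈ an(i)`, `b j i` is the (attained) maximum of the path weights over all paths
from `j` to `i`; `b i i = c i i`; and `b j i = 0` for `j ∉ An(i)`. -/
def IsMLMatrix (E : Fin d → Fin d → Prop) (c b : Fin d → Fin d → ℝ≥0) : Prop :=
  (∀ i, b i i = c i i) ∧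
  (∀ j i, j ≠ i → ¬ anc E j i → b j i = 0) ∧
  (∀ j i p, PathFrom E j i p → pathWeight c j p ≤ b j i) ∧
  (∀ j i, anc E j i → ∃ p, PathFrom E j i p ∧ pathWeight c j p = b j i)

/-- `x` is the vector of recursive max-linear values on `(E, c)` for noise `z`:
`x i = max (max_{k ∈ pa(i)} c k i * x k) (c i i * z i)`, empty max being `0`. -/
def IsRecML (E : Fin d → Fin d → Prop) (c : Fin d → Fin d → ℝ≥0) (z x : Fin d → ℝ≥0) : Prop :=
  ∀ i, x i = (Finset.univ.sup fun k => if E k i then c k i * x k else 0) ⊔ c i i * z i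

/-- Max-times matrix product `F ⊙ G`. -/
noncomputable def mprod (F G : Fin d → Fin d → ℝ≥0) : Fin d → Fin d → ℝ≥0 :=
  fun i j => Finset.univ.sup fun k => F i k * G k j

/-- Max-times matrix power, `mpow A 0` being the identity matrix. -/
noncomputable def mpow (A : Fin d → Fin d → ℝ≥0) : ℕ → Fin d → Fin d → ℝ≥0
  | 0 => fun i j => if i = j then 1 else 0
  | n + 1 => mprod (mpow A n) A

/-- `p` is a max-weighted path from `j` to `i`. -/
def MaxWeighted (E : Fin d → Fin d → Prop) (c b : Fin d → Fin d → ℝ≥0)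
    (j i : Fin d) (p : List (Fin d)) : Prop :=
  PathFrom E j i p ∧ pathWeight c j p = b j i

/-- The lowest max-weighted ancestors of `i` in `U`: nodes `j ∈ An(i) ∩ U` such that no
max-weighted path from `j` to `i` passes through a node of `U \ {j}`. -/
def AnLow (E : Fin d → Fin d → Prop) (c b : Fin d → Fin d → ℝ≥0)
    (U : Set (Fin d)) (i : Fin d) : Set (Fin d) :=
  {j | (anc E j i ∨ j = i) ∧ j ∈ U ∧
    ∀ p, MaxWeighted E c b j i p → ¬ ∃ u ∈ U \ {j}, u ∈ p}

/-- The highest max-weighted descendants of `i` in `U`: nodes `l ∈ De(i) ∩ U` such that no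
max-weighted path from `i` to `l` passes through a node of `U \ {l}`. -/
def DeHigh (E : Fin d → Fin d → Prop) (c b : Fin d → Fin d → ℝ≥0)
    (U : Set (Fin d)) (i : Fin d) : Set (Fin d) :=
  {l | (anc E i l ∨ l = i) ∧ l ∈ U ∧
    ∀ p, MaxWeighted E c b i l p → ¬ ∃ u ∈ U \ {l}, u ∈ p}

/-!
Gluing a max-weighted `s`–`k` path to a max-weighted `k`–`t` path gives an `s`–`t` path of
weight `b s k * b k t / b k k`, and splitting an `s`–`t` path at an interior node `k` inverts
this. Hence `b s k * b k t / b k k ≤ b s t`, with equality exactly when some max-weighted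
`s`–`t` path passes through `k`. So no max-weighted path from `s` to `t` meets `U` outside its
endpoints iff all these ratios with `k ∈ U` lie strictly below `b s t`. If `i ∈ U`, every path
to or from `i` meets `U` at `i`, which leaves only `i` itself.
-/

noncomputable def edgeProd (c : Fin d → Fin d → ℝ≥0) (p : List (Fin d)) : ℝ≥0 :=
  ((p.zip p.tail).map fun q => c q.1 q.2).prod

section Paths

variable {E : Fin d → Fin d → Prop} {c : Fin d → Fin d → ℝ≥0}

lemma pathWeight_eq_mul_edgeProd (j : Fin d) (p : List (Fin d)) :
    pathWeight c j p = c j j * edgeProd c p := rfl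

lemma edgeProd_cons_cons (a a' : Fin d) (l : List (Fin d)) :
    edgeProd c (a :: a' :: l) = c a a' * edgeProd c (a' :: l) := by
  simp [edgeProd]

lemma edgeProd_append_cons (u : Fin d) (t : List (Fin d)) :
    ∀ s : List (Fin d), edgeProd c (s ++ u :: t) = edgeProd c (s ++ [u]) * edgeProd c (u :: t)
  | [] => (one_mul _).symm
  | [a] => by simp [edgeProd]
  | a :: a' :: s => by
      have ih := edgeProd_append_cons u t (a' :: s)
      simp only [List.cons_append, edgeProd_cons_cons] at ih ⊢
      rw [ih, mul_assoc]

lemma edgeProd_pos (hce : ∀ k i, E k i → 0 < c k i) :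
    ∀ {p : List (Fin d)}, List.IsChain E p → 0 < edgeProd c p
  | [], _ | [_], _ => one_pos
  | a :: a' :: l, h => by
      rw [List.isChain_cons_cons] at h
      rw [edgeProd_cons_cons]
      exact mul_pos (hce _ _ h.1) (edgeProd_pos hce h.2)

lemma PathFrom.head_mem {j i : Fin d} {p : List (Fin d)} (h : PathFrom E j i p) : j ∈ p :=
  List.mem_of_head? h.2.1

lemma PathFrom.last_mem {j i : Fin d} {p : List (Fin d)} (h : PathFrom E j i p) : i ∈ p :=
  List.mem_of_getLast? h.2.2.1

lemma pathFrom_append_cons_iff {j u i : Fin d} {s t : List (Fin d)} (hs : s ≠ [])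
    (ht : t ≠ []) :
    PathFrom E j i (s ++ u :: t) ↔ PathFrom E j u (s ++ [u]) ∧ PathFrom E u i (u :: t) := by
  have hs₀ := List.length_pos_iff.2 hs
  have ht₀ := List.length_pos_iff.2 ht
  have hs' : 2 ≤ (s ++ [u]).length := by simp; omega
  have ht' : 2 ≤ (u :: t).length := by simp; omega
  have hst : 2 ≤ (s ++ u :: t).length := by simp; omega
  have hlast : (s ++ u :: t).getLast? = (u :: t).getLast? :=
    List.getLast?_append_of_ne_nil _ (List.cons_ne_nil u t)
  show _ ∧ _ ∧ _ ∧ List.IsChain E _ ↔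
    (_ ∧ _ ∧ _ ∧ List.IsChain E _) ∧ _ ∧ _ ∧ _ ∧ List.IsChain E _
  rw [List.isChain_split, List.head?_append_of_ne_nil _ hs, List.head?_append_of_ne_nil _ hs,
    hlast]
  simp only [hs', ht', hst, List.head?_cons, List.getLast?_singleton, true_and,
    List.getLast?_append_of_ne_nil _ (List.cons_ne_nil u [])]
  tauto

lemma PathFrom.append {j k i : Fin d} {p q : List (Fin d)} (hp : PathFrom E j k p)
    (hq : PathFrom E k i q) :
    PathFrom E j i (p ++ q.tail) ∧ edgeProd c (p ++ q.tail) = edgeProd c p * edgeProd c q := by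
  obtain ⟨s, rfl⟩ := List.getLast?_eq_some_iff.1 hp.2.2.1
  obtain ⟨t, rfl⟩ := List.head?_eq_some_iff.1 hq.2.1
  have hs : s ≠ [] := by rintro rfl; simpa using hp.1
  have ht : t ≠ [] := by rintro rfl; simpa using hq.1
  simp only [List.tail_cons, List.append_assoc, List.singleton_append]
  exact ⟨(pathFrom_append_cons_iff hs ht).2 ⟨hp, hq⟩, edgeProd_append_cons k t s⟩

lemma PathFrom.split {j u i : Fin d} {p : List (Fin d)} (hp : PathFrom E j i p) (hu : u ∈ p)
    (huj : u ≠ j) (hui : u ≠ i) :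
    ∃ p₁ p₂, PathFrom E j u p₁ ∧ PathFrom E u i p₂ ∧
      edgeProd c p = edgeProd c p₁ * edgeProd c p₂ := by
  obtain ⟨s, t, rfl⟩ := List.append_of_mem hu
  have hs : s ≠ [] := by
    rintro rfl
    exact huj (by simpa using hp.2.1)
  have ht : t ≠ [] := by
    rintro rfl
    exact hui (by simpa using hp.2.2.1)
  obtain ⟨h₁, h₂⟩ := (pathFrom_append_cons_iff hs ht).1 hp
  exact ⟨_, _, h₁, h₂, edgeProd_append_cons u t s⟩

lemma Acyclic.ne_of_anc (hE : Acyclic E) {j i : Fin d} (h : anc E j i) : j ≠ i := by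
  rintro rfl
  exact hE j h

end Paths

namespace IsMLMatrix

variable {E : Fin d → Fin d → Prop} {c b : Fin d → Fin d → ℝ≥0}

lemma pos_of_anc (hb : IsMLMatrix E c b) (hcd : ∀ i, 0 < c i i)
    (hce : ∀ k i, E k i → 0 < c k i) {j i : Fin d} (h : anc E j i) : 0 < b j i := by
  obtain ⟨p, hp, hw⟩ := hb.2.2.2 j i h
  rw [← hw, pathWeight_eq_mul_edgeProd]
  exact mul_pos (hcd j) (edgeProd_pos hce hp.2.2.2)

lemma mul_le_mul_diag (hb : IsMLMatrix E c b) {j u i : Fin d} (hju : anc E j u) (hui : anc E u i) :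
    b j u * b u i ≤ b j i * c u u := by
  obtain ⟨p, hp, hwp⟩ := hb.2.2.2 j u hju
  obtain ⟨q, hq, hwq⟩ := hb.2.2.2 u i hui
  obtain ⟨hpq, hw⟩ := hp.append (c := c) hq
  calc b j u * b u i = pathWeight c j (p ++ q.tail) * c u u := by
        simp only [← hwp, ← hwq, pathWeight_eq_mul_edgeProd, hw]; ring
    _ ≤ b j i * c u u := by gcongr; exact hb.2.2.1 j i _ hpq

lemma mul_eq_of_mem_maxWeighted (hb : IsMLMatrix E c b) {j u i : Fin d} {p : List (Fin d)}
    (hp : MaxWeighted E c b j i p) (hu : u ∈ p) (huj : u ≠ j) (hui : u ≠ i) :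
    anc E j u ∧ anc E u i ∧ b j u * b u i = b j i * c u u := by
  obtain ⟨p₁, p₂, h₁, h₂, hw⟩ := hp.1.split (c := c) hu huj hui
  have hju : anc E j u := ⟨p₁, h₁⟩
  have hui : anc E u i := ⟨p₂, h₂⟩
  refine ⟨hju, hui, (hb.mul_le_mul_diag hju hui).antisymm ?_⟩
  calc b j i * c u u = pathWeight c j p₁ * pathWeight c u p₂ := by
        simp only [← hp.2, pathWeight_eq_mul_edgeProd, hw]; ring
    _ ≤ b j u * b u i := mul_le_mul' (hb.2.2.1 j u _ h₁) (hb.2.2.1 u i _ h₂)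

lemma exists_maxWeighted_mem_of_mul_eq (hb : IsMLMatrix E c b) (hcd : ∀ i, 0 < c i i)
    {j u i : Fin d} (hju : anc E j u) (hui : anc E u i) (heq : b j u * b u i = b j i * c u u) :
    ∃ p, MaxWeighted E c b j i p ∧ u ∈ p := by
  obtain ⟨p, hp, hwp⟩ := hb.2.2.2 j u hju
  obtain ⟨q, hq, hwq⟩ := hb.2.2.2 u i hui
  obtain ⟨hpq, hw⟩ := hp.append (c := c) hq
  refine ⟨p ++ q.tail, ⟨hpq, mul_right_cancel₀ (hcd u).ne' ?_⟩,
    List.mem_append_left _ hp.last_mem⟩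
  rw [← heq, ← hwp, ← hwq]
  simp only [pathWeight_eq_mul_edgeProd, hw]
  ring

lemma forall_maxWeighted_not_mem_iff (hb : IsMLMatrix E c b) (hcd : ∀ i, 0 < c i i)
    {W : Set (Fin d)} {s t : Fin d} (hs : s ∉ W) (ht : t ∉ W) :
    (∀ p, MaxWeighted E c b s t p → ¬ ∃ u ∈ W, u ∈ p) ↔
      ∀ k ∈ W, anc E s k → anc E k t → b s k * b k t < b s t * c k k := by
  constructor
  · intro h k hk hsk hkt
    refine (hb.mul_le_mul_diag hsk hkt).lt_of_ne fun heq => ?_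
    obtain ⟨p, hp, hkp⟩ := hb.exists_maxWeighted_mem_of_mul_eq hcd hsk hkt heq
    exact h p hp ⟨k, hk, hkp⟩
  · rintro h p hp ⟨u, hu, hup⟩
    obtain ⟨hsu, hut, heq⟩ :=
      hb.mul_eq_of_mem_maxWeighted hp hup (ne_of_mem_of_not_mem hu hs) (ne_of_mem_of_not_mem hu ht)
    exact (h u hu hsu hut).ne heq

lemma sup_ratio_lt_iff (hb : IsMLMatrix E c b) (hcd : ∀ i, 0 < c i i) (U : Set (Fin d))
    {s t : Fin d} (hst : 0 < b s t) :
    (Finset.univ.sup fun k =>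
        if anc E s k ∧ k ∈ U ∧ anc E k t then b s k * b k t / b k k else 0) < b s t ↔
      ∀ k ∈ U, anc E s k → anc E k t → b s k * b k t < b s t * c k k := by
  rw [Finset.sup_lt_iff (bot_lt_iff_ne_bot.2 hst.ne')]
  refine forall_congr' fun k => ?_
  rw [hb.1 k]
  split_ifs with hk
  · simp [hk, div_lt_iff₀ (hcd k)]
  · simp only [Finset.mem_univ, hst, true_implies, true_iff]
    tauto

end IsMLMatrix

section LowHigh

variable {E : Fin d → Fin d → Prop} {c b : Fin d → Fin d → ℝ≥0} {U : Set (Fin d)}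
  {i : Fin d}

lemma anLow_eq_singleton (hE : Acyclic E) (hb : IsMLMatrix E c b) (hi : i ∈ U) :
    AnLow E c b U i = {i} := by
  ext j
  simp only [AnLow, Set.mem_ofPred_eq, Set.mem_singleton_iff]
  constructor
  · rintro ⟨hji | rfl, -, hj⟩
    · obtain ⟨p, hp⟩ := hb.2.2.2 j i hji
      exact absurd ⟨i, ⟨hi, (hE.ne_of_anc hji).symm⟩, hp.1.last_mem⟩ (hj p hp)
    · rfl
  · rintro rfl
    exact ⟨Or.inr rfl, hi, fun p hp => absurd ⟨p, hp.1⟩ (hE j)⟩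

lemma deHigh_eq_singleton (hE : Acyclic E) (hb : IsMLMatrix E c b) (hi : i ∈ U) :
    DeHigh E c b U i = {i} := by
  ext l
  simp only [DeHigh, Set.mem_ofPred_eq, Set.mem_singleton_iff]
  constructor
  · rintro ⟨hil | rfl, -, hl⟩
    · obtain ⟨p, hp⟩ := hb.2.2.2 i l hil
      exact absurd ⟨i, ⟨hi, hE.ne_of_anc hil⟩, hp.1.head_mem⟩ (hl p hp)
    · rfl
  · rintro rfl
    exact ⟨Or.inr rfl, hi, fun p hp => absurd ⟨p, hp.1⟩ (hE l)⟩

lemma anLow_eq_of_not_mem (hE : Acyclic E) (hcd : ∀ i, 0 < c i i)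
    (hce : ∀ k i, E k i → 0 < c k i) (hb : IsMLMatrix E c b) (hi : i ∉ U) :
    AnLow E c b U i = {j | anc E j i ∧ j ∈ U ∧
      (Finset.univ.sup fun k =>
        if anc E j k ∧ k ∈ U ∧ anc E k i then b j k * b k i / b k k else 0) < b j i} := by
  ext j
  simp only [AnLow, Set.mem_ofPred_eq]
  by_cases hjU : j ∈ U
  swap
  · simp [hjU]
  rw [or_iff_left (ne_of_mem_of_not_mem hjU hi)]
  refine and_congr_right fun hji => ?_
  rw [hb.forall_maxWeighted_not_mem_iff hcd (fun h => h.2 rfl) (fun h => hi h.1),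
    hb.sup_ratio_lt_iff hcd U (hb.pos_of_anc hcd hce hji)]
  simp only [hjU, true_and]
  exact ⟨fun h k hk hjk => h k ⟨hk, (hE.ne_of_anc hjk).symm⟩ hjk, fun h k hk => h k hk.1⟩

lemma deHigh_eq_of_not_mem (hE : Acyclic E) (hcd : ∀ i, 0 < c i i)
    (hce : ∀ k i, E k i → 0 < c k i) (hb : IsMLMatrix E c b) (hi : i ∉ U) :
    DeHigh E c b U i = {l | anc E i l ∧ l ∈ U ∧
      (Finset.univ.sup fun k =>
        if anc E i k ∧ k ∈ U ∧ anc E k l then b i k * b k l / b k k else 0) < b i l} := by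
  ext l
  simp only [DeHigh, Set.mem_ofPred_eq]
  by_cases hlU : l ∈ U
  swap
  · simp [hlU]
  rw [or_iff_left (ne_of_mem_of_not_mem hlU hi)]
  refine and_congr_right fun hil => ?_
  rw [hb.forall_maxWeighted_not_mem_iff hcd (fun h => hi h.1) (fun h => h.2 rfl),
    hb.sup_ratio_lt_iff hcd U (hb.pos_of_anc hcd hce hil)]
  simp only [hlU, true_and]
  exact ⟨fun h k hk hik hkl => h k ⟨hk, hE.ne_of_anc hkl⟩ hik hkl, fun h k hk => h k hk.1⟩

end LowHigh

theorem stmt15_general {d : ℕ} (E : Fin d → Fin d → Prop) (hE : Acyclic E)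
    (c : Fin d → Fin d → ℝ≥0) (hcd : ∀ i, 0 < c i i) (hce : ∀ k i, E k i → 0 < c k i)
    (b : Fin d → Fin d → ℝ≥0) (hb : IsMLMatrix E c b)
    (U : Set (Fin d)) (i : Fin d) :
    (i ∈ U → AnLow E c b U i = {i} ∧ DeHigh E c b U i = {i}) ∧
    (i ∉ U →
      AnLow E c b U i = {j | anc E j i ∧ j ∈ U ∧
        (Finset.univ.sup fun k =>
          if anc E j k ∧ k ∈ U ∧ anc E k i then b j k * b k i / b k k else 0) < b j i} ∧
      DeHigh E c b U i = {l | anc E i l ∧ l ∈ U ∧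
        (Finset.univ.sup fun k =>
          if anc E i k ∧ k ∈ U ∧ anc E k l then b i k * b k l / b k k else 0) < b i l}) :=
  ⟨fun hi => ⟨anLow_eq_singleton hE hb hi, deHigh_eq_singleton hE hb hi⟩,
    fun hi => ⟨anLow_eq_of_not_mem hE hcd hce hb hi, deHigh_eq_of_not_mem hE hcd hce hb hi⟩⟩

/-- Let `U ⊆ V` and `i ∈ V`.
(a) If `i ∈ U`, then `An_low^U(i) = De_high^U(i) = {i}`.
(b) If `i ∉ U`, then
`An_low^U(i) = {j ∈ an(i) ∩ U : b j i > max_{k ∈ de(j) ∩ U ∩ an(i)} b j k * b k i / b k k}` and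
`De_high^U(i) = {l ∈ de(i) ∩ U : b i l > max_{k ∈ de(i) ∩ U ∩ an(l)} b i k * b k l / b k k}`
(empty maxima being `0`). -/
theorem stmt15 {d : ℕ} (hd : 1 ≤ d) (E : Fin d → Fin d → Prop) (hE : Acyclic E)
    (c : Fin d → Fin d → ℝ≥0) (hcd : ∀ i, 0 < c i i) (hce : ∀ k i, E k i → 0 < c k i)
    (b : Fin d → Fin d → ℝ≥0) (hb : IsMLMatrix E c b)
    (U : Set (Fin d)) (i : Fin d) :
    (i ∈ U → AnLow E c b U i = {i} ∧ DeHigh E c b U i = {i}) ∧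
    (i ∉ U →
      AnLow E c b U i = {j | anc E j i ∧ j ∈ U ∧
        (Finset.univ.sup fun k =>
          if anc E j k ∧ k ∈ U ∧ anc E k i then b j k * b k i / b k k else 0) < b j i} ∧
      DeHigh E c b U i = {l | anc E i l ∧ l ∈ U ∧
        (Finset.univ.sup fun k =>
          if anc E i k ∧ k ∈ U ∧ anc E k l then b i k * b k l / b k k else 0) < b i l}) :=
  stmt15_general E hE c hcd hce b hb U i
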